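/- arXiv:1312.4356 — 2 statements merged into one kernel-verified Lean document; each statement's English description precedes it below -/
import Mathlib

section
/- Let V be a real Hilbert space and ε₀ > 0. For each ε ∈ [0, ε₀), let a_ε : V × V → ℝ be a bilinear form, l_ε : V → ℝ a linear form, u_ε ∈ V a solution of the state equation a_ε(u_ε, v) = l_ε(v) for all v ∈ V, and J_ε : V → ℝ a functional that is Fréchet differentiable at u₀, and let p_ε ∈ V be an adjoint state satisfying a_ε(φ, p_ε) = −DJ_ε(u₀)(φ) for all φ ∈ V. Suppose there exist real numbers δa, δl, δJ₁, δJ₂ and a function f : [0, ε₀) → ℝ with f(ε) ≥ 0 and f(ε) → 0 as ε → 0⁺, such that as ε → 0⁺: (a_ε − a₀)(u₀, p_ε) = f(ε)·δa + o(f(ε)); (l_ε − l₀)(p_ε) = f(ε)·δl + o(f(ε)); J_ε(u_ε) = J_ε(u₀) + DJ_ε(u₀)(u_ε − u₀) + f(ε)·δJ₁ + o(f(ε)); and J_ε(u₀) = J₀(u₀) + f(ε)·δJ₂ + o(f(ε)). Then the cost function j(ε) := J_ε(u_ε) satisfies j(ε) − j(0) = f(ε)·(δa − δl + δJ₁ +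 δJ₂) + o(f(ε)) as ε → 0⁺. -/
open Filter Asymptotics

/-! The adjoint state converts the unknown first-order variation `DJ_ε(u₀)(u_ε - u₀)` of the
state into the perturbations of the data: testing the state equations with `p_ε` and the
adjoint equation with `u_ε - u₀` gives
`DJ_ε(u₀)(u_ε - u₀) = (a_ε - a₀)(u₀, p_ε) - (l_ε - l₀)(p_ε)`.
Substituting this into the expansion of `J_ε(u_ε)` and adding the expansion of `J_ε(u₀)`
leaves a sum of four `o(f)` remainders. -/

theorem LinearMap.apply_sub_eq_of_adjoint {R M : Type*} [CommRing R] [AddCommGroup M]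
    [Module R M] (a a₀ : M →ₗ[R] M →ₗ[R] R) (l l₀ D : M →ₗ[R] R) {u u₀ p : M}
    (hu : a u p = l p) (hu₀ : a₀ u₀ p = l₀ p) (hp : a (u - u₀) p = -D (u - u₀)) :
    D (u - u₀) = (a u₀ p - a₀ u₀ p) - (l p - l₀ p) := by
  rw [map_sub, LinearMap.sub_apply, hu] at hp
  linear_combination hp + hu₀

theorem onoff_topderiv_stmt0_general
    {V : Type*} [NormedAddCommGroup V] [InnerProductSpace ℝ V]
    (ε₀ : ℝ) (hε₀ : 0 < ε₀)
    (a : ℝ → V →ₗ[ℝ] V →ₗ[ℝ] ℝ) (l : ℝ → V →ₗ[ℝ] ℝ)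
    (u p : ℝ → V) (J : ℝ → V → ℝ) (DJ : ℝ → V →L[ℝ] ℝ)
    (f : ℝ → ℝ) (δa δl δJ₁ δJ₂ : ℝ)
    (hstate : ∀ ε ∈ Set.Ico (0:ℝ) ε₀, ∀ v : V, a ε (u ε) v = l ε v)
    (hadj : ∀ ε ∈ Set.Ico (0:ℝ) ε₀, ∀ φ : V, a ε φ (p ε) = - DJ ε φ)
    (ha : (fun ε => a ε (u 0) (p ε) - a 0 (u 0) (p ε) - f ε * δa)
            =o[nhdsWithin 0 (Set.Ioi 0)] f)
    (hl : (fun ε => l ε (p ε) - l 0 (p ε) - f ε * δl)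
            =o[nhdsWithin 0 (Set.Ioi 0)] f)
    (hJ₁ : (fun ε => J ε (u ε) - J ε (u 0) - DJ ε (u ε - u 0) - f ε * δJ₁)
            =o[nhdsWithin 0 (Set.Ioi 0)] f)
    (hJ₂ : (fun ε => J ε (u 0) - J 0 (u 0) - f ε * δJ₂)
            =o[nhdsWithin 0 (Set.Ioi 0)] f) :
    (fun ε => J ε (u ε) - J 0 (u 0) - f ε * (δa - δl + δJ₁ + δJ₂))
      =o[nhdsWithin 0 (Set.Ioi 0)] f := by
  have hzero : (0:ℝ) ∈ Set.Ico 0 ε₀ := ⟨le_rfl, hε₀⟩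
  have hsmall : ∀ᶠ ε in nhdsWithin 0 (Set.Ioi 0), ε ∈ Set.Ico (0:ℝ) ε₀ :=
    mem_of_superset (Ioo_mem_nhdsGT hε₀) Set.Ioo_subset_Ico_self
  refine (((ha.sub hl).add hJ₁).add hJ₂).congr' ?_ EventuallyEq.rfl
  filter_upwards [hsmall] with ε hε
  have hvariation := LinearMap.apply_sub_eq_of_adjoint (a ε) (a 0) (l ε) (l 0)
    (DJ ε : V →ₗ[ℝ] ℝ) (hstate ε hε (p ε)) (hstate 0 hzero (p ε)) (hadj ε hε _)
  simp only [ContinuousLinearMap.coe_coe] at hvariation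
  rw [hvariation]
  ring

/-- Amstutz's abstract adjoint-method proposition for topological derivatives:
under first-order expansions of the bilinear form, the linear form and the cost
functional, the cost function `j(ε) = J_ε(u_ε)` admits the topological asymptotic
expansion `j(ε) - j(0) = f(ε)(δa - δl + δJ₁ + δJ₂) + o(f(ε))` as `ε → 0⁺`. -/
theorem onoff_topderiv_stmt0
    {V : Type*} [NormedAddCommGroup V] [InnerProductSpace ℝ V] [CompleteSpace V]
    (ε₀ : ℝ) (hε₀ : 0 < ε₀)
    (a : ℝ → V →ₗ[ℝ] V →ₗ[ℝ] ℝ) (l : ℝ → V →ₗ[ℝ] ℝ)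
    (u p : ℝ → V) (J : ℝ → V → ℝ) (DJ : ℝ → V →L[ℝ] ℝ)
    (f : ℝ → ℝ) (δa δl δJ₁ δJ₂ : ℝ)
    (hstate : ∀ ε ∈ Set.Ico (0:ℝ) ε₀, ∀ v : V, a ε (u ε) v = l ε v)
    (hdiff : ∀ ε ∈ Set.Ico (0:ℝ) ε₀, HasFDerivAt (J ε) (DJ ε) (u 0))
    (hadj : ∀ ε ∈ Set.Ico (0:ℝ) ε₀, ∀ φ : V, a ε φ (p ε) = - DJ ε φ)
    (hf_nonneg : ∀ ε ∈ Set.Ico (0:ℝ) ε₀, 0 ≤ f ε)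
    (hf_lim : Tendsto f (nhdsWithin 0 (Set.Ioi 0)) (nhds 0))
    (ha : (fun ε => a ε (u 0) (p ε) - a 0 (u 0) (p ε) - f ε * δa)
            =o[nhdsWithin 0 (Set.Ioi 0)] f)
    (hl : (fun ε => l ε (p ε) - l 0 (p ε) - f ε * δl)
            =o[nhdsWithin 0 (Set.Ioi 0)] f)
    (hJ₁ : (fun ε => J ε (u ε) - J ε (u 0) - DJ ε (u ε - u 0) - f ε * δJ₁)
            =o[nhdsWithin 0 (Set.Ioi 0)] f)
    (hJ₂ : (fun ε => J ε (u 0) - J 0 (u 0) - f ε * δJ₂)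
            =o[nhdsWithin 0 (Set.Ioi 0)] f) :
    (fun ε => J ε (u ε) - J 0 (u 0) - f ε * (δa - δl + δJ₁ + δJ₂))
      =o[nhdsWithin 0 (Set.Ioi 0)] f :=
  onoff_topderiv_stmt0_general ε₀ hε₀ a l u p J DJ f δa δl δJ₁ δJ₂ hstate hadj ha hl hJ₁ hJ₂
end

section
/- Let V be a real Hilbert space. Let a_ε : V × V → ℝ be a bilinear form, l_ε : V → ℝ a linear form, and let a₀ : V × V → ℝ be bilinear and l₀ : V → ℝ linear. Let u_ε, u₀, p_ε ∈ V and let J_ε : V → ℝ be Fréchet differentiable at u₀. Assume: a_ε(u_ε, v) = l_ε(v) for all v ∈ V (perturbed state equation); a₀(u₀, v) = l₀(v) for all v ∈ V (unperturbed state equation); and a_ε(φ, p_ε) = −DJ_ε(u₀)(φ) for all φ ∈ V (adjoint equation). Then DJ_ε(u₀)(u_ε − u₀) = (a_ε − a₀)(u₀, p_ε) − (l_ε − l₀)(p_ε). -/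
theorem onoff_topderiv_stmt1_general
    {V : Type*} [NormedAddCommGroup V] [InnerProductSpace ℝ V]
    (aε a₀ : V →ₗ[ℝ] V →ₗ[ℝ] ℝ) (lε l₀ : V →ₗ[ℝ] ℝ)
    (uε u₀ pε : V) (DJε : V →L[ℝ] ℝ)
    (hstateε : ∀ v : V, aε uε v = lε v)
    (hstate₀ : ∀ v : V, a₀ u₀ v = l₀ v)
    (hadj : ∀ φ : V, aε φ pε = - DJε φ) :
    DJε (uε - u₀) = (aε u₀ pε - a₀ u₀ pε) - (lε pε - l₀ pε) := by
  calc DJε (uε - u₀) = -aε (uε - u₀) pε := by rw [hadj, neg_neg]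
    _ = aε u₀ pε - lε pε := by rw [map_sub, LinearMap.sub_apply, hstateε]; ring
    _ = (aε u₀ pε - a₀ u₀ pε) - (lε pε - l₀ pε) := by rw [hstate₀]; ring

/-- The key algebraic identity in the proof of Amstutz's adjoint-method proposition:
if `u_ε` solves the perturbed state equation, `u₀` the unperturbed one, and `p_ε` the
adjoint equation, then `DJ_ε(u₀)(u_ε − u₀) = (a_ε − a₀)(u₀, p_ε) − (l_ε − l₀)(p_ε)`. -/
theorem onoff_topderiv_stmt1
    {V : Type*} [NormedAddCommGroup V] [InnerProductSpace ℝ V] [CompleteSpace V]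
    (aε a₀ : V →ₗ[ℝ] V →ₗ[ℝ] ℝ) (lε l₀ : V →ₗ[ℝ] ℝ)
    (uε u₀ pε : V) (Jε : V → ℝ) (DJε : V →L[ℝ] ℝ)
    (hdiff : HasFDerivAt Jε DJε u₀)
    (hstateε : ∀ v : V, aε uε v = lε v)
    (hstate₀ : ∀ v : V, a₀ u₀ v = l₀ v)
    (hadj : ∀ φ : V, aε φ pε = - DJε φ) :
    DJε (uε - u₀) = (aε u₀ pε - a₀ u₀ pε) - (lε pε - l₀ pε) :=
  onoff_topderiv_stmt1_general aε a₀ lε l₀ uε u₀ pε DJε hstateε hstate₀ hadj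
end
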